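/- Fix an integer N ≥ 1 and a real β > 0. For the maximal angular momentum ℓ = N−1 (so the radial function is R_{N,N−1}(ρ) = e^{−ρ/2} ρ^{N−1}), the momentum-space wave function ψ(p) = ∫₀^∞ e^{i p r} · (2β r)^{N−1} e^{−β r} · r dr satisfies, for every p ∈ ℝ, the momentum-distribution identity |ψ(p)|² = (N!)² · (2β)^{2(N−1)} / (β² + p²)^{N+1}. -/

import Mathlib

open MeasureTheory Complex Real Nat

/-!
With `c = β - i p`, the integrand is `(2β)^(N-1) r^N e^{-c r}`. Since `Re c = β > 0`, the
Laplace moment `∫₀^∞ rⁿ e^{-c r} dr = n! / c^(n+1)` holds (by induction on `n`, integrating by parts), and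
`|c|² = β² + p²` turns its squared modulus into the stated distribution.
-/

open Filter Topology Set

section LaplaceMoments

variable {c : ℂ}

theorem norm_ofReal_pow_mul_cexp_neg_mul {t : ℝ} (ht : 0 ≤ t) (n : ℕ) :
    ‖(t : ℂ) ^ n * cexp (-(c * t))‖ = t ^ n * Real.exp (-c.re * t) := by
  rw [norm_mul, norm_pow, Complex.norm_exp, Complex.norm_real, Real.norm_of_nonneg ht]
  simp

theorem tendsto_ofReal_pow_mul_cexp_neg_mul_atTop (hc : 0 < c.re) (n : ℕ) :
    Tendsto (fun t : ℝ => (t : ℂ) ^ n * cexp (-(c * t))) atTop (𝓝 0) := by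
  rw [tendsto_zero_iff_norm_tendsto_zero]
  refine (tendsto_rpow_mul_exp_neg_mul_atTop_nhds_zero n c.re hc).congr' ?_
  filter_upwards [eventually_ge_atTop 0] with t ht
  rw [norm_ofReal_pow_mul_cexp_neg_mul ht, Real.rpow_natCast]

theorem integrableOn_ofReal_pow_mul_cexp_neg_mul_Ioi (hc : 0 < c.re) (n : ℕ) :
    IntegrableOn (fun t : ℝ => (t : ℂ) ^ n * cexp (-(c * t))) (Ioi 0) := by
  have hreal : IntegrableOn (fun t : ℝ => t ^ (n : ℝ) * Real.exp (-c.re * t ^ (1 : ℝ))) (Ioi 0) :=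
    integrableOn_rpow_mul_exp_neg_mul_rpow (by linarith [(n.cast_nonneg : (0 : ℝ) ≤ n)])
      one_pos hc
  refine hreal.mono' (by fun_prop) ?_
  filter_upwards [ae_restrict_mem measurableSet_Ioi] with t ht
  rw [norm_ofReal_pow_mul_cexp_neg_mul (le_of_lt ht), Real.rpow_one, Real.rpow_natCast]

theorem hasDerivAt_ofReal_pow_succ_mul_cexp_neg_mul (n : ℕ) (t : ℝ) :
    HasDerivAt (fun t : ℝ => (t : ℂ) ^ (n + 1) * cexp (-(c * t)))
      ((n + 1) * ((t : ℂ) ^ n * cexp (-(c * t))) - c * ((t : ℂ) ^ (n + 1) * cexp (-(c * t))))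
      t := by
  have hpow : HasDerivAt (fun t : ℝ => (t : ℂ) ^ (n + 1)) ((n + 1) * (t : ℂ) ^ n) t := by
    simpa using (hasDerivAt_pow (n + 1) (t : ℂ)).comp_ofReal
  have hexp : HasDerivAt (fun t : ℝ => cexp (-(c * t))) (cexp (-(c * t)) * -c) t := by
    simpa using (((hasDerivAt_id (t : ℂ)).const_mul c).neg.cexp).comp_ofReal
  exact (hpow.mul hexp).congr_deriv (by ring)

theorem integral_ofReal_pow_mul_cexp_neg_mul_Ioi (hc : 0 < c.re) (n : ℕ) :
    ∫ t in Ioi (0 : ℝ), (t : ℂ) ^ n * cexp (-(c * t)) = n ! / c ^ (n + 1) := by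
  induction n with
  | zero =>
    simpa [neg_div] using integral_exp_mul_complex_Ioi (a := -c) (by simpa using hc) 0
  | succ n ih =>
    -- Integrating the derivative of `t^(n+1) e^{-ct}`, which vanishes at `0` and `∞`,
    -- gives `0 = (n+1) Iₙ - c Iₙ₊₁`.
    have hFTC := integral_Ioi_of_hasDerivAt_of_tendsto'
      (fun t _ => hasDerivAt_ofReal_pow_succ_mul_cexp_neg_mul (c := c) n t)
      (((integrableOn_ofReal_pow_mul_cexp_neg_mul_Ioi hc n).const_mul _).sub
        ((integrableOn_ofReal_pow_mul_cexp_neg_mul_Ioi hc (n + 1)).const_mul _))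
      (tendsto_ofReal_pow_mul_cexp_neg_mul_atTop hc (n + 1))
    rw [integral_sub ((integrableOn_ofReal_pow_mul_cexp_neg_mul_Ioi hc n).const_mul _)
      ((integrableOn_ofReal_pow_mul_cexp_neg_mul_Ioi hc (n + 1)).const_mul _),
      integral_const_mul, integral_const_mul, ih] at hFTC
    rw [ofReal_zero, zero_pow n.succ_ne_zero, zero_mul, sub_zero] at hFTC
    have hc0 : c ≠ 0 := fun h => by simp [h] at hc
    rw [eq_div_iff (pow_ne_zero _ hc0)]
    field_simp at hFTC
    push_cast [factorial_succ]
    linear_combination -hFTC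

end LaplaceMoments

theorem norm_sq_ofReal_sub_I_mul_ofReal (a b : ℝ) : ‖(a : ℂ) - I * b‖ ^ 2 = a ^ 2 + b ^ 2 := by
  rw [Complex.sq_norm, Complex.normSq_apply]
  simp [sq]

/-- for maximal angular momentum `ℓ = N−1`, the momentum-space wave function
`ψ(p) = ∫₀^∞ e^{ipr} (2βr)^{N−1} e^{−βr} r dr` has momentum distribution
`|ψ(p)|² = (N!)² (2β)^{2(N−1)} / (β² + p²)^{N+1}`. -/
theorem hydrogen_max_ell_momentum_distribution
    (N : ℕ) (hN : 1 ≤ N) (β : ℝ) (hβ : 0 < β) (p : ℝ) :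
    ‖∫ r in Set.Ioi (0 : ℝ),
        Complex.exp (Complex.I * p * r)
          * (((2 * β * r) ^ (N - 1) * Real.exp (-β * r) : ℝ) : ℂ) * (r : ℂ)‖ ^ 2
      = ((N ! : ℝ)) ^ 2 * (2 * β) ^ (2 * (N - 1)) / (β ^ 2 + p ^ 2) ^ (N + 1) := by
  set c : ℂ := β - I * p with hc
  have hc_re : 0 < c.re := by simpa [hc] using hβ
  have hintegrand : ∀ r : ℝ,
      cexp (I * p * r) * (((2 * β * r) ^ (N - 1) * Real.exp (-β * r) : ℝ) : ℂ) * (r : ℂ)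
        = ((2 * β : ℝ) : ℂ) ^ (N - 1) * ((r : ℂ) ^ N * cexp (-(c * r))) := by
    intro r
    obtain ⟨n, rfl⟩ := Nat.exists_eq_add_of_le' hN
    have hexp : cexp (-(c * r)) = cexp (I * p * r) * cexp ((-β * r : ℝ) : ℂ) := by
      rw [← Complex.exp_add, hc]
      push_cast
      ring_nf
    rw [hexp]
    push_cast
    ring
  simp_rw [hintegrand, integral_const_mul, integral_ofReal_pow_mul_cexp_neg_mul_Ioi hc_re]
  rw [norm_mul, norm_pow, norm_div, norm_pow, Complex.norm_real, Complex.norm_natCast, mul_pow,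
    div_pow, pow_right_comm _ (N + 1) 2, hc, norm_sq_ofReal_sub_I_mul_ofReal,
    Real.norm_of_nonneg (by positivity), ← pow_mul, mul_comm (N - 1)]
  ring
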